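/- Let 1 ≤ i ≤ n−1 and let f ∈ P_n be a polynomial all of whose coefficients are integers (i.e. f ∈ ℤ[x_1,…,x_n]). Then there exists an i-symmetric polynomial g ∈ ℤ[x_1,…,x_n] such that (A_i − R_i)(f) = (1−q)·g; in particular (A_i − R_i)(f) is i-symmetric and divisible by 1−q. -/

import Mathlib

open MvPolynomial

noncomputable section

/-- The ground field `F = ℚ(q)`, rational functions over `ℚ`. -/
abbrev F : Type := RatFunc ℚ

/-- The indeterminate `q`. -/
def q : F := RatFunc.X

/-- The polynomial ring `P_n = F[x_1, …, x_n]` (variables indexed `0, …, n-1`). -/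
abbrev Pn (n : ℕ) : Type := MvPolynomial (Fin n) F

/-- The adjacent transposition `s_i` swapping positions `i` and `i+1` (0-indexed). -/
def transp (n i : ℕ) (h : i + 1 < n) : Equiv.Perm (Fin n) :=
  Equiv.swap ⟨i, by omega⟩ ⟨i + 1, h⟩

/-- Multiplication by the variable `x_j`. -/
def Xop {n : ℕ} (j : Fin n) : Pn n →ₗ[F] Pn n := LinearMap.mulLeft F (X j)

/-- A family of candidate divided-difference operators. -/
abbrev DDFam (n : ℕ) := ∀ i : ℕ, i + 1 < n → (Pn n →ₗ[F] Pn n)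

/-- `dd` is the family of divided difference operators:
`(x_i - x_{i+1}) · ∂_i f = f - s_i f`.  This determines `dd` uniquely. -/
def IsDD {n : ℕ} (dd : DDFam n) : Prop :=
  ∀ (i : ℕ) (h : i + 1 < n) (f : Pn n),
    (X (⟨i, by omega⟩ : Fin n) - X ⟨i + 1, h⟩) * dd i h f
      = f - rename (⇑(transp n i h)) f

/-- The q-commutator operator `A_i = ∂_i ∘ X_i - q · X_i ∘ ∂_i`. -/
def Aop {n : ℕ} (dd : DDFam n) (i : ℕ) (h : i + 1 < n) : Pn n →ₗ[F] Pn n :=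
  dd i h ∘ₗ Xop ⟨i, by omega⟩ - q • (Xop (⟨i, by omega⟩ : Fin n) ∘ₗ dd i h)

/-- The operator `B_i = -(∂_i ∘ X_{i+1} - q · X_{i+1} ∘ ∂_i)`. -/
def Bop {n : ℕ} (dd : DDFam n) (i : ℕ) (h : i + 1 < n) : Pn n →ₗ[F] Pn n :=
  -(dd i h ∘ₗ Xop ⟨i + 1, h⟩ - q • (Xop (⟨i + 1, h⟩ : Fin n) ∘ₗ dd i h))

/-- Swap the exponents of `x_i` and `x_{i+1}` in a monomial exponent vector. -/
def swapIdx (n i : ℕ) (h : i + 1 < n) (d : Fin n →₀ ℕ) : Fin n →₀ ℕ :=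
  Finsupp.equivMapDomain (transp n i h) d

/-- Value of `R_i` on the monomial with exponent vector `d`. -/
def Rval {n : ℕ} (i : ℕ) (h : i + 1 < n) (d : Fin n →₀ ℕ) : Pn n :=
  if d ⟨i + 1, h⟩ < d ⟨i, by omega⟩ then q • monomial (swapIdx n i h d) (1 : F)
  else if d ⟨i, by omega⟩ < d ⟨i + 1, h⟩ then
    (1 - q) • monomial d (1 : F) + monomial (swapIdx n i h d) (1 : F)
  else monomial d (1 : F)

/-- The operator `R_i`, the linear extension of `Rval` from monomials. -/
def Rop {n : ℕ} (i : ℕ) (h : i + 1 < n) : Pn n →ₗ[F] Pn n :=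
  (basisMonomials (Fin n) F).constr F (Rval i h)

/-- Value of `R*_i` on the monomial with exponent vector `d`. -/
def Rstarval {n : ℕ} (i : ℕ) (h : i + 1 < n) (d : Fin n →₀ ℕ) : Pn n :=
  if d ⟨i + 1, h⟩ ≤ d ⟨i, by omega⟩ then monomial (swapIdx n i h d) (1 : F)
  else (1 - q) • monomial d (1 : F) + q • monomial (swapIdx n i h d) (1 : F)

/-- The operator `R*_i`, the linear extension of `Rstarval` from monomials. -/
def Rstarop {n : ℕ} (i : ℕ) (h : i + 1 < n) : Pn n →ₗ[F] Pn n :=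
  (basisMonomials (Fin n) F).constr F (Rstarval i h)

/-- `f` is a symmetric polynomial. -/
def symmP {n : ℕ} (f : Pn n) : Prop :=
  ∀ σ : Equiv.Perm (Fin n), rename (⇑σ) f = f

/-- The ideal `I_n` generated by symmetric polynomials with zero constant term. -/
def In (n : ℕ) : Ideal (Pn n) :=
  Ideal.span {f : Pn n | symmP f ∧ constantCoeff f = 0}

/-- The quotient map `P_n → P_n / I_n` as an `F`-linear map. -/
def mkI (n : ℕ) : Pn n →ₗ[F] (Pn n ⧸ In n) :=
  (Ideal.Quotient.mkₐ F (In n)).toLinearMap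

/-- `R^k`: the image in `P_n/I_n` of the homogeneous polynomials of degree `k`. -/
def RkSub (n k : ℕ) : Submodule F (Pn n ⧸ In n) :=
  Submodule.map (mkI n) (homogeneousSubmodule (Fin n) F k)

/-- The Coxeter length of a permutation: its number of inversions. -/
def len {n : ℕ} (w : Equiv.Perm (Fin n)) : ℕ :=
  (Finset.univ.filter (fun p : Fin n × Fin n => p.1 < p.2 ∧ w p.2 < w p.1)).card

/-- The staircase monomial `x_1^{n-1} x_2^{n-2} ⋯ x_{n-1}`. -/
def staircase (n : ℕ) : Pn n := ∏ j : Fin n, (X j : Pn n) ^ (n - 1 - (j : ℕ))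

/-- `S` is the family of Schubert polynomials: `S w₀` is the staircase monomial, and
`∂_i 𝔖_w = 𝔖_{w s_i}` whenever `ℓ(w s_i) < ℓ(w)`.  This determines `S` uniquely. -/
def IsSchubert {n : ℕ} (dd : DDFam n) (S : Equiv.Perm (Fin n) → Pn n) : Prop :=
  S (Fin.revPerm) = staircase n ∧
  ∀ (w : Equiv.Perm (Fin n)) (i : ℕ) (h : i + 1 < n),
    len (w * transp n i h) < len w → dd i h (S w) = S (w * transp n i h)

/-- The 3-cycle `(a, b, c)`, sending `a ↦ b`, `b ↦ c`, `c ↦ a`. -/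
def cyc3 {n : ℕ} (a b c : Fin n) : Equiv.Perm (Fin n) :=
  Equiv.swap a c * Equiv.swap a b

/-- The Hecke algebra relations for a family of operators. -/
def HeckeRels {n : ℕ} (T : ∀ i : ℕ, i + 1 < n → (Pn n →ₗ[F] Pn n)) : Prop :=
  (∀ (i : ℕ) (h : i + 2 < n),
      T i (by omega) ∘ₗ (T (i + 1) (by omega) ∘ₗ T i (by omega))
        = T (i + 1) (by omega) ∘ₗ (T i (by omega) ∘ₗ T (i + 1) (by omega))) ∧
  (∀ (i j : ℕ) (hi : i + 1 < n) (hj : j + 1 < n), (i + 1 < j ∨ j + 1 < i) →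
      T i hi ∘ₗ T j hj = T j hj ∘ₗ T i hi) ∧
  (∀ (i : ℕ) (h : i + 1 < n),
      T i h ∘ₗ T i h = (1 - q) • T i h + q • LinearMap.id)

/-- Composition `T_{j₁} ∘ T_{j₂} ∘ ⋯ ∘ T_{j_k}` along a list of indices. -/
def compFam {n : ℕ} (T : ℕ → (Pn n →ₗ[F] Pn n)) : List ℕ → (Pn n →ₗ[F] Pn n)
  | [] => LinearMap.id
  | j :: l => T j ∘ₗ compFam T l

/-- Totalized version of `Aop` (identity outside the allowed index range). -/
def Atot {n : ℕ} (dd : DDFam n) (j : ℕ) : Pn n →ₗ[F] Pn n :=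
  if h : j + 1 < n then Aop dd j h else LinearMap.id

/-- Totalized version of `Rop` (identity outside the allowed index range). -/
def Rtot (n : ℕ) (j : ℕ) : Pn n →ₗ[F] Pn n :=
  if h : j + 1 < n then Rop j h else LinearMap.id

/-- The (0-indexed) index set `J_μ`: all `j ∈ {0, …, n-2}` such that `j+1` is not a
partial sum `μ_1 + ⋯ + μ_k` of the partition. -/
def Jlist (n : ℕ) (μ : List ℕ) : List ℕ :=
  (List.range (n - 1)).filter
    (fun j => (List.range (μ.length + 1)).all (fun k => (μ.take k).sum != j + 1))

/-- The value `w(a)` of a permutation, as a function on naturals. -/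
def permVal {n : ℕ} (w : Equiv.Perm (Fin n)) (a : ℕ) : ℕ :=
  if h : a < n then ((w ⟨a, h⟩ : Fin n) : ℕ) else a

open scoped Classical in
/-- The factor `m_q` attached to the block of positions `p, p+1, …, p+m-1`:
`(-q)^j` if, within the block, `w` has descents exactly at the first `j` places
(i.e. `w` decreases on the first `j+1` entries and then increases), and `0` otherwise. -/
def blockWeight {n : ℕ} (w : Equiv.Perm (Fin n)) (p m : ℕ) : F :=
  if h : ∃ j, j < m ∧ ∀ a : ℕ, p ≤ a → a + 1 < p + m →
      (permVal w (a + 1) < permVal w a ↔ a < p + j)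
  then (-q) ^ h.choose else 0

/-- `weight_q^μ(w) = ∏ m_q(w_i)`, the product of the block factors over the blocks of `μ`. -/
def weightq {n : ℕ} (μ : List ℕ) (w : Equiv.Perm (Fin n)) : F :=
  ∏ t ∈ Finset.range μ.length, blockWeight w ((μ.take t).sum) (μ.getD t 0)

/-- `μ` is a partition of `n`. -/
def IsPartition (n : ℕ) (μ : List ℕ) : Prop :=
  List.Pairwise (· ≥ ·) μ ∧ (∀ x ∈ μ, 0 < x) ∧ μ.sum = n

/-- The operator `D_i f = c_i · f + P_i(x_i, x_{i+1}) · ∂_i f`. -/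
def Dop {n : ℕ} (dd : DDFam n) (c : ℕ → F) (Pp : ℕ → MvPolynomial (Fin 2) F)
    (i : ℕ) (h : i + 1 < n) : Pn n →ₗ[F] Pn n :=
  c i • LinearMap.id +
    LinearMap.mulLeft F (aeval ![(X ⟨i, by omega⟩ : Pn n), X ⟨i + 1, h⟩] (Pp i)) ∘ₗ dd i h

/-- `f` has integer coefficients. -/
def IsIntPoly {n : ℕ} (f : Pn n) : Prop :=
  ∀ d : Fin n →₀ ℕ, ∃ z : ℤ, coeff d f = (z : F)

/-! Write `x = x_i`, `y = x_{i+1}`. On a monomial `x^a y^b m` with `a > b` one finds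
`(A_i - R_i)(x^a y^b m) = (1 - q) ∑_{b ≤ j ≤ a} x^j y^(a+b-j) m`; for `a < b` the sum over
`a ≤ j ≤ b` comes with a minus sign, and for `a = b` the value is `0`. This sum over a segment of
monomials is invariant under `x ↔ y` (reflect `j ↦ a + b - j`) and has coefficients `±1`, so its
linear extension gives `g`. To verify the identity without computing `∂_i`, multiply by `x - y`:
then `∂_i` disappears through `(x - y) ∂_i f = f - s_i f`, the segment sum telescopes, and `x - y`
cancels in the domain `P_n`. -/

namespace MvPolynomial

variable {σ R : Type*} [CommRing R]

theorem constr_basisMonomials_monomial {M : Type*} [AddCommGroup M] [Module R M]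
    (φ : (σ →₀ ℕ) → M) (d : σ →₀ ℕ) :
    (basisMonomials σ R).constr R φ (monomial d 1) = φ d := by
  simpa using (basisMonomials σ R).constr_basis R φ d

def segmentExp (x y : σ) (d : σ →₀ ℕ) (j : ℕ) : σ →₀ ℕ :=
  (d.update x j).update y (d x + d y - j)

variable (R) in
def segmentSum (x y : σ) (d : σ →₀ ℕ) (l u : ℕ) : MvPolynomial σ R :=
  ∑ j ∈ Finset.Icc l u, monomial (segmentExp x y d j) 1

variable (R) in
def segmentVal (x y : σ) (d : σ →₀ ℕ) : MvPolynomial σ R :=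
  if d y < d x then segmentSum R x y d (d y) (d x)
  else if d x < d y then -segmentSum R x y d (d x) (d y)
  else 0

variable (R) in
def segmentOp (x y : σ) : MvPolynomial σ R →ₗ[R] MvPolynomial σ R :=
  (basisMonomials σ R).constr R (segmentVal R x y)

variable {x y : σ}

theorem segmentOp_monomial (d : σ →₀ ℕ) :
    segmentOp R x y (monomial d 1) = segmentVal R x y d :=
  constr_basisMonomials_monomial _ d

theorem segmentExp_apply_right (d : σ →₀ ℕ) (j : ℕ) : segmentExp x y d j y = d x + d y - j := by
  classical
  simp [segmentExp, Finsupp.update_apply]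

theorem segmentExp_apply_of_ne (d : σ →₀ ℕ) (j : ℕ) {k : σ} (hkx : k ≠ x) (hky : k ≠ y) :
    segmentExp x y d j k = d k := by
  classical
  simp [segmentExp, Finsupp.update_apply, hkx, hky]

section

variable (hxy : x ≠ y) (d : σ →₀ ℕ) (j : ℕ)
include hxy

theorem segmentExp_apply_left : segmentExp x y d j x = j := by
  classical
  simp [segmentExp, Finsupp.update_apply, hxy]

theorem segmentExp_self : segmentExp x y d (d x) = d := by
  ext k
  rcases eq_or_ne k x with rfl | hkx
  · exact segmentExp_apply_left hxy d _
  rcases eq_or_ne k y with rfl | hky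
  · rw [segmentExp_apply_right]; omega
  · exact segmentExp_apply_of_ne d _ hkx hky

theorem X_mul_monomial_segmentExp_succ (hj : j < d x + d y) :
    (X y : MvPolynomial σ R) * monomial (segmentExp x y d (j + 1)) 1
      = X x * monomial (segmentExp x y d j) 1 := by
  have hexp : Finsupp.single y 1 + segmentExp x y d (j + 1)
      = Finsupp.single x 1 + segmentExp x y d j := by
    ext k
    rcases eq_or_ne k x with rfl | hkx
    · simp [segmentExp_apply_left hxy, hxy, add_comm]
    rcases eq_or_ne k y with rfl | hky
    · simp [segmentExp_apply_right, hxy.symm]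
      omega
    · simp [segmentExp_apply_of_ne d _ hkx hky, hkx.symm, hky.symm]
  rw [X, X, monomial_mul, monomial_mul, hexp]

theorem X_sub_X_mul_segmentSum {l u : ℕ} (hlu : l ≤ u) (hu : u ≤ d x + d y) :
    (X x - X y) * segmentSum R x y d l u
      = X x * monomial (segmentExp x y d u) 1 - X y * monomial (segmentExp x y d l) 1 := by
  induction u, hlu using Nat.le_induction with
  | base => rw [segmentSum, Finset.Icc_self, Finset.sum_singleton, sub_mul]
  | succ u hlu ih =>
    rw [segmentSum, ← Finset.insert_Icc_right_eq_Icc_add_one (by omega),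
      Finset.sum_insert (by simp), mul_add, ← segmentSum, ih (by omega), sub_mul,
      X_mul_monomial_segmentExp_succ hxy d u (by omega)]
    ring

variable [DecidableEq σ]

theorem equivMapDomain_swap_segmentExp (hj : j ≤ d x + d y) :
    (segmentExp x y d j).equivMapDomain (Equiv.swap x y) = segmentExp x y d (d x + d y - j) := by
  ext k
  rw [Finsupp.equivMapDomain_apply, Equiv.symm_swap]
  rcases eq_or_ne k x with rfl | hkx
  · rw [Equiv.swap_apply_left, segmentExp_apply_right, segmentExp_apply_left hxy]
  rcases eq_or_ne k y with rfl | hky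
  · rw [Equiv.swap_apply_right, segmentExp_apply_left hxy, segmentExp_apply_right]; omega
  · rw [Equiv.swap_apply_of_ne_of_ne hkx hky, segmentExp_apply_of_ne d _ hkx hky,
      segmentExp_apply_of_ne d _ hkx hky]

theorem equivMapDomain_swap_eq_segmentExp :
    d.equivMapDomain (Equiv.swap x y) = segmentExp x y d (d y) := by
  conv_lhs => rw [← segmentExp_self hxy d]
  rw [equivMapDomain_swap_segmentExp hxy d _ (by omega), Nat.add_sub_cancel_left]

theorem rename_swap_segmentSum {l u : ℕ} (hlu : l + u = d x + d y) :
    rename (Equiv.swap x y) (segmentSum R x y d l u) = segmentSum R x y d l u := by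
  have hmem {j : ℕ} (hj : j ∈ Finset.Icc l u) : l + u - j ∈ Finset.Icc l u := by
    simp only [Finset.mem_Icc] at hj ⊢; omega
  rw [segmentSum, map_sum]
  refine Finset.sum_nbij' (l + u - ·) (l + u - ·) (fun _ => hmem) (fun _ => hmem)
    (fun j hj => ?_) (fun j hj => ?_) (fun j hj => ?_) <;> simp only [Finset.mem_Icc] at hj
  · omega
  · omega
  · rw [rename_monomial, ← Finsupp.equivMapDomain_eq_mapDomain,
      equivMapDomain_swap_segmentExp hxy d j (by omega), hlu]

theorem rename_swap_segmentVal :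
    rename (Equiv.swap x y) (segmentVal R x y d) = segmentVal R x y d := by
  unfold segmentVal
  split_ifs
  · exact rename_swap_segmentSum hxy d (add_comm _ _)
  · rw [map_neg, rename_swap_segmentSum hxy d rfl]
  · exact map_zero _

theorem rename_swap_segmentOp (f : MvPolynomial σ R) :
    rename (Equiv.swap x y) (segmentOp R x y f) = segmentOp R x y f := by
  suffices (rename (Equiv.swap x y)).toLinearMap ∘ₗ segmentOp R x y = segmentOp R x y from
    LinearMap.congr_fun this f
  refine (basisMonomials σ R).ext fun d => ?_
  rw [coe_basisMonomials, LinearMap.comp_apply, segmentOp_monomial, AlgHom.toLinearMap_apply,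
    rename_swap_segmentVal hxy]

end

theorem segmentVal_mem_coeffsIn (d : σ →₀ ℕ) :
    segmentVal R x y d ∈ coeffsIn σ (Submodule.span ℤ {(1 : R)}) := by
  have hsum (l u : ℕ) : segmentSum R x y d l u ∈ coeffsIn σ (Submodule.span ℤ {(1 : R)}) :=
    Submodule.sum_mem _ fun _ _ => monomial_mem_coeffsIn.2 (Submodule.mem_span_singleton_self 1)
  unfold segmentVal
  split_ifs
  · exact hsum _ _
  · exact neg_mem (hsum _ _)
  · exact zero_mem _

theorem map_mem_coeffsIn_of_monomial (G : MvPolynomial σ R →ₗ[R] MvPolynomial σ R)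
    (hG : ∀ d, G (monomial d 1) ∈ coeffsIn σ (Submodule.span ℤ {(1 : R)}))
    {f : MvPolynomial σ R} (hf : f ∈ coeffsIn σ (Submodule.span ℤ {(1 : R)})) :
    G f ∈ coeffsIn σ (Submodule.span ℤ {(1 : R)}) := by
  suffices coeffsIn σ (Submodule.span ℤ {(1 : R)})
      ≤ (coeffsIn σ (Submodule.span ℤ {(1 : R)})).comap (G.toAddMonoidHom.toIntLinearMap) from
    this hf
  refine coeffsIn_le.2 fun c hc d => ?_
  obtain ⟨k, rfl⟩ := Submodule.mem_span_singleton.1 hc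
  rw [Submodule.mem_comap, AddMonoidHom.coe_toIntLinearMap, LinearMap.toAddMonoidHom_coe,
    ← smul_monomial, map_zsmul]
  exact Submodule.smul_mem _ k (hG d)

theorem segmentOp_mem_coeffsIn {f : MvPolynomial σ R}
    (hf : f ∈ coeffsIn σ (Submodule.span ℤ {(1 : R)})) :
    segmentOp R x y f ∈ coeffsIn σ (Submodule.span ℤ {(1 : R)}) :=
  map_mem_coeffsIn_of_monomial _
    (fun d => by rw [segmentOp_monomial]; exact segmentVal_mem_coeffsIn d) hf

end MvPolynomial

theorem isIntPoly_iff_mem_coeffsIn {n : ℕ} (f : Pn n) :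
    IsIntPoly f ↔ f ∈ coeffsIn (Fin n) (Submodule.span ℤ {(1 : F)}) := by
  simp only [IsIntPoly, mem_coeffsIn, Submodule.mem_span_singleton, zsmul_one, eq_comm]

section

variable {n i : ℕ} (h : i + 1 < n)

theorem transp_eq_swap : transp n i h = Equiv.swap ⟨i, by omega⟩ ⟨i + 1, h⟩ := rfl

theorem Fin.mk_ne_mk_succ : (⟨i, by omega⟩ : Fin n) ≠ ⟨i + 1, h⟩ := by
  simp [Fin.ext_iff]

theorem swapIdx_eq_segmentExp (d : Fin n →₀ ℕ) :
    swapIdx n i h d = segmentExp ⟨i, by omega⟩ ⟨i + 1, h⟩ d (d ⟨i + 1, h⟩) :=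
  equivMapDomain_swap_eq_segmentExp (Fin.mk_ne_mk_succ h) d

theorem rename_transp_monomial (d : Fin n →₀ ℕ) :
    rename (transp n i h) (monomial d (1 : F))
      = monomial (segmentExp ⟨i, by omega⟩ ⟨i + 1, h⟩ d (d ⟨i + 1, h⟩)) 1 := by
  rw [rename_monomial, ← Finsupp.equivMapDomain_eq_mapDomain, ← swapIdx_eq_segmentExp]
  rfl

theorem Rop_monomial (d : Fin n →₀ ℕ) : Rop i h (monomial d 1) = Rval i h d :=
  constr_basisMonomials_monomial _ d

theorem IsDD.X_sub_X_mul_Aop {dd : DDFam n} (hdd : IsDD dd) (f : Pn n) :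
    (X ⟨i, by omega⟩ - X ⟨i + 1, h⟩) * Aop dd i h f
      = X ⟨i, by omega⟩ * f - X ⟨i + 1, h⟩ * rename (transp n i h) f
        - q • (X ⟨i, by omega⟩ * (f - rename (transp n i h) f)) := by
  have hsX : rename (transp n i h) (X ⟨i, by omega⟩ * f)
      = X ⟨i + 1, h⟩ * rename (transp n i h) f := by
    rw [map_mul, rename_X, transp_eq_swap, Equiv.swap_apply_left]
  simp only [Aop, Xop, LinearMap.sub_apply, LinearMap.comp_apply, LinearMap.smul_apply,
    LinearMap.mulLeft_apply, mul_sub, mul_smul_comm, mul_left_comm _ (X ⟨i, by omega⟩ : Pn n),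
    hdd i h, hsX]

theorem IsDD.Aop_sub_Rop_monomial {dd : DDFam n} (hdd : IsDD dd) (d : Fin n →₀ ℕ) :
    (Aop dd i h - Rop i h) (monomial d 1)
      = (1 - q) • segmentVal F ⟨i, by omega⟩ ⟨i + 1, h⟩ d := by
  have hxy := Fin.mk_ne_mk_succ h
  have hd : (monomial d 1 : Pn n)
      = monomial (segmentExp ⟨i, by omega⟩ ⟨i + 1, h⟩ d (d ⟨i, by omega⟩)) 1 := by
    rw [segmentExp_self hxy]
  refine mul_left_cancel₀ (sub_ne_zero.2 (X_injective.ne hxy)) ?_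
  rw [LinearMap.sub_apply, mul_sub, hdd.X_sub_X_mul_Aop, rename_transp_monomial, Rop_monomial,
    mul_smul_comm, Rval, segmentVal, swapIdx_eq_segmentExp, hd]
  rcases lt_trichotomy (d ⟨i + 1, h⟩) (d ⟨i, by omega⟩) with hlt | heq | hgt
  · simp only [if_pos hlt, X_sub_X_mul_segmentSum hxy d hlt.le (by omega), smul_eq_C_mul,
      map_sub, map_one]
    ring
  · simp only [heq, lt_irrefl, if_false, sub_self, smul_zero, mul_zero]
    ring
  · simp only [if_neg hgt.not_gt, if_pos hgt, mul_neg,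
      X_sub_X_mul_segmentSum hxy d hgt.le (by omega), smul_eq_C_mul, map_sub, map_one]
    ring

theorem IsDD.Aop_sub_Rop {dd : DDFam n} (hdd : IsDD dd) :
    Aop dd i h - Rop i h = (1 - q) • segmentOp F ⟨i, by omega⟩ ⟨i + 1, h⟩ :=
  (basisMonomials (Fin n) F).ext fun d => by
    rw [coe_basisMonomials, hdd.Aop_sub_Rop_monomial, LinearMap.smul_apply, segmentOp_monomial]

end

theorem stmt12_general (n : ℕ) (dd : DDFam n) (hdd : IsDD dd)
    (i : ℕ) (h : i + 1 < n) (f : Pn n) (hf : IsIntPoly f) :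
    ∃ g : Pn n, IsIntPoly g ∧ rename (⇑(transp n i h)) g = g ∧
      (Aop dd i h - Rop i h) f = (1 - q) • g := by
  refine ⟨segmentOp F ⟨i, by omega⟩ ⟨i + 1, h⟩ f, ?_, ?_, ?_⟩
  · rw [isIntPoly_iff_mem_coeffsIn] at hf ⊢
    exact segmentOp_mem_coeffsIn hf
  · rw [transp_eq_swap]
    exact rename_swap_segmentOp (Fin.mk_ne_mk_succ h) f
  · rw [hdd.Aop_sub_Rop, LinearMap.smul_apply]

/-- for `f` with integer coefficients, `(A_i - R_i) f` is
`i`-symmetric and divisible by `1 - q` within `ℤ[x_1, …, x_n]`. -/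
theorem stmt12 (n : ℕ) (hn : 2 ≤ n) (dd : DDFam n) (hdd : IsDD dd)
    (i : ℕ) (h : i + 1 < n) (f : Pn n) (hf : IsIntPoly f) :
    ∃ g : Pn n, IsIntPoly g ∧ rename (⇑(transp n i h)) g = g ∧
      (Aop dd i h - Rop i h) f = (1 - q) • g :=
  stmt12_general n dd hdd i h f hf

end
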